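/- arXiv:2106.03885 — 5 statements merged into one kernel-verified Lean document; each statement's English description precedes it below -/
import Mathlib

section
/- Suppose b_0^0 = z_0 and that the shooting parameters are updated by the direct Newton multiple-shooting iteration b_{n+1}^{k+1} = φ_n(b_n^k) + Dφ_n(b_n^k)(b_n^{k+1} − b_n^k) for 0 ≤ n ≤ N−1, with b_0^{k+1} = z_0 for every k. Then for all indices with k ≥ n one has b_n^k = z_n, where z_n is the exact sequential solution defined by z_0 = z_0 and z_{n+1} = φ_n(z_n). In particular the iteration converges to the exact solution in at most N steps. -/
/-- **Finite-step convergence of the direct Newton multiple-shooting iteration.**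
If `b 0 0 = z0` and the shooting parameters are updated by the direct Newton
iteration `b (n+1) (k+1) = φ n (b n k) + Dφ n (b n k) (b n (k+1) - b n k)`,
with `b 0 (k+1) = z0` for every `k`, then `b n k = z n` whenever `k ≥ n`,
where `z` is the exact sequential solution. -/
theorem finite_step_convergence_newton
    {F : Type*} [NormedAddCommGroup F] [NormedSpace ℝ F]
    (N : ℕ) (hN : 0 < N) (z0 : F) (φ : ℕ → F → F)
    (hφ : ∀ n, n < N → Differentiable ℝ (φ n))
    (b : ℕ → ℕ → F)   -- `b n k` : shooting parameter for sub-interval `n`, iteration `k`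
    (hb00 : b 0 0 = z0)
    (hb0 : ∀ k, b 0 (k + 1) = z0)
    (hupd : ∀ k, ∀ n, n < N →
      b (n + 1) (k + 1) =
        φ n (b n k) + fderiv ℝ (φ n) (b n k) (b n (k + 1) - b n k))
    (z : ℕ → F) (hz0 : z 0 = z0) (hz : ∀ n, n < N → z (n + 1) = φ n (z n)) :
    ∀ n k, n ≤ N → n ≤ k → b n k = z n := by
  intro n
  induction n with
  | zero =>
    intro k _ _
    cases k with
    | zero => simpa [hz0] using hb00
    | succ k => simpa [hz0] using hb0 k
  | succ n ih =>
    intro k hnN hnk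
    obtain ⟨k, rfl⟩ : ∃ k', k = k' + 1 := ⟨k - 1, by omega⟩
    have hN' : n < N := by omega
    have h1 : b n k = z n := ih k (by omega) (by omega)
    have h2 : b n (k + 1) = z n := ih (k + 1) (by omega) (by omega)
    rw [hupd k n hN', h1, h2, hz n hN']
    simp
end

section
/- Let z(t) = α(z_0, t) denote the solution curve through z_0 and let v(t) ∈ L(ℝ^{n_z}, ℝ^{n_z}) be the Fréchet derivative of w ↦ α(w, t) at z_0 (the sensitivity of the flow to its initial condition). Then v satisfies the linear matrix-valued initial value problem v(s) = I (the identity map) and v′(t) = Df(t, z(t)) ∘ v(t) for all t ∈ [s, T], where Df(t, z) denotes the Fréchet derivative of z ↦ f(t, z). -/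
/-!
Integrating the flow equation gives `α w t = w + ∫ τ in s..t, f τ (α w τ)`. Since `∂_w α` and
`D_z f` are jointly continuous, they are bounded near `{z0} × [s, t]`, so the integral may be
differentiated in `w` under the integral sign: `∂_w α(z0, t) = id + ∫ τ in s..t, D_z f ∘ ∂_w α`.
The fundamental theorem of calculus then gives the variational equation.
-/

open Set MeasureTheory Filter Metric
open scoped Topology Interval

section Slice

variable {𝕜 E G F : Type*} [NontriviallyNormedField 𝕜] [NormedAddCommGroup E] [NormedSpace 𝕜 E]
  [NormedAddCommGroup G] [NormedSpace 𝕜 G] [NormedAddCommGroup F] [NormedSpace 𝕜 F]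
  {g : E → G → F} {U : Set E} {J : Set G}

theorem DifferentiableOn.differentiableAt_slice
    (hg : DifferentiableOn 𝕜 (fun p : E × G => g p.1 p.2) (U ×ˢ J)) (hU : IsOpen U)
    {x : E} (hx : x ∈ U) {y : G} (hy : y ∈ J) :
    DifferentiableAt 𝕜 (fun w => g w y) x := by
  have hmaps : MapsTo (fun w => (w, y)) U (U ×ˢ J) := fun _ hw => ⟨hw, hy⟩
  exact ((hg (x, y) ⟨hx, hy⟩).comp x (differentiableWithinAt_id.prodMk
    (differentiableWithinAt_const y)) hmaps).differentiableAt (hU.mem_nhds hx)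

theorem ContDiffOn.continuousOn_fderiv_slice
    (hg : ContDiffOn 𝕜 1 (fun p : E × G => g p.1 p.2) (U ×ˢ J)) (hU : IsOpen U) :
    ContinuousOn (fun p : E × G => fderiv 𝕜 (fun w => g w p.2) p.1) (U ×ˢ J) := by
  intro p hp
  have hsmooth : ContDiffWithinAt 𝕜 1 (fun q : (E × G) × E => g q.2 q.1.2)
      ((U ×ˢ J) ×ˢ U) (p, p.1) :=
    (hg (p.1, p.2) hp).comp (p, p.1) (contDiffWithinAt_snd.prodMk contDiffWithinAt_fst.snd)
      fun q (hq : q ∈ (U ×ˢ J) ×ˢ U) => ⟨hq.2, hq.1.2⟩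
  refine ((hsmooth.fderivWithin (m := 0) (g := Prod.fst) (f := fun q w => g w q.2)
    contDiffWithinAt_fst hU.uniqueDiffOn (by simp) hp fun q hq => hq.1).continuousWithinAt).congr
    (fun q hq => ?_) ?_
  · exact (fderivWithin_of_isOpen hU hq.1).symm
  · exact (fderivWithin_of_isOpen hU hp.1).symm

end Slice

section Integral

variable {E H : Type*} [NormedAddCommGroup E] [NormedSpace ℝ E] {a b t : ℝ}

theorem eq_add_integral_of_hasDerivWithinAt_Icc [CompleteSpace E] {u φ : ℝ → E}
    (hu : ∀ τ ∈ Icc a b, HasDerivWithinAt u (φ τ) (Icc a b) τ) (hφ : ContinuousOn φ (Icc a b))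
    (ht : t ∈ Icc a b) : u t = u a + ∫ τ in a..t, φ τ := by
  have hsub : Icc a t ⊆ Icc a b := Icc_subset_Icc_right ht.2
  have hderiv : ∀ τ ∈ Ioo a t, HasDerivWithinAt u (φ τ) (Ioi τ) τ := fun τ hτ =>
    ((hu τ (hsub (Ioo_subset_Icc_self hτ))).hasDerivAt
      (Icc_mem_nhds hτ.1 (hτ.2.trans_le ht.2))).hasDerivWithinAt
  have hint : IntervalIntegrable φ volume a t :=
    (hφ.mono (uIcc_of_le ht.1 ▸ hsub)).intervalIntegrable
  rw [intervalIntegral.integral_eq_sub_of_hasDeriv_right_of_le ht.1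
    (fun τ hτ => (hu τ (hsub hτ)).continuousWithinAt.mono hsub) hderiv hint, add_sub_cancel]

theorem hasDerivWithinAt_of_eqOn_const_add_integral [CompleteSpace E] {v φ : ℝ → E} {c : E}
    (hv : ∀ τ ∈ Icc a b, v τ = c + ∫ σ in a..τ, φ σ) (hφ : ContinuousOn φ (Icc a b))
    (ht : t ∈ Icc a b) : HasDerivWithinAt v (φ t) (Icc a b) t := by
  have : Fact (t ∈ Icc a b) := ⟨ht⟩
  have hint : IntervalIntegrable φ volume a t :=
    (hφ.mono (uIcc_of_le ht.1 ▸ Icc_subset_Icc_right ht.2)).intervalIntegrable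
  exact ((intervalIntegral.integral_hasDerivWithinAt_right hint
    (hφ.stronglyMeasurableAtFilter_nhdsWithin measurableSet_Icc t)
    (hφ t ht)).const_add c).congr (fun τ hτ => hv τ hτ) (hv t ht)

theorem hasFDerivAt_intervalIntegral_of_continuousOn [NormedAddCommGroup H] [NormedSpace ℝ H]
    [ProperSpace H] {F : H → ℝ → E} {F' : H → ℝ → H →L[ℝ] E} {U : Set H} {x₀ : H}
    (hU : IsOpen U) (hx₀ : x₀ ∈ U) (hF : ∀ x ∈ U, ContinuousOn (F x) [[a, b]])
    (hF' : ContinuousOn (fun p : H × ℝ => F' p.1 p.2) (U ×ˢ [[a, b]]))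
    (hdiff : ∀ x ∈ U, ∀ t ∈ [[a, b]], HasFDerivAt (fun y => F y t) (F' x t) x) :
    HasFDerivAt (fun x => ∫ t in a..b, F x t) (∫ t in a..b, F' x₀ t) x₀ := by
  obtain ⟨r, hr, hrU⟩ : ∃ r > 0, closedBall x₀ r ⊆ U :=
    nhds_basis_closedBall.mem_iff.1 (hU.mem_nhds hx₀)
  obtain ⟨C, hC⟩ := ((isCompact_closedBall x₀ r).prod isCompact_uIcc).exists_bound_of_continuousOn
    (hF'.mono (prod_mono hrU subset_rfl))
  have hIoc : Ι a b ⊆ [[a, b]] := uIoc_subset_uIcc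
  refine intervalIntegral.hasFDerivAt_integral_of_dominated_of_fderiv_le (bound := fun _ => C)
    (ball_mem_nhds x₀ hr) ?_ (hF x₀ hx₀).intervalIntegrable ?_ ?_ intervalIntegrable_const ?_
  · filter_upwards [hU.mem_nhds hx₀] with x hx
    exact ((hF x hx).mono hIoc).aestronglyMeasurable measurableSet_uIoc
  · exact ((hF'.comp (continuousOn_const.prodMk continuousOn_id) fun t ht => ⟨hx₀, ht⟩).mono
      hIoc).aestronglyMeasurable measurableSet_uIoc
  · exact Eventually.of_forall fun t ht x hx => hC (x, t) ⟨ball_subset_closedBall hx, hIoc ht⟩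
  · exact Eventually.of_forall fun t ht x hx =>
      hdiff x (hrU (ball_subset_closedBall hx)) t (hIoc ht)

end Integral

section Flow

variable {E : Type*} [NormedAddCommGroup E] [NormedSpace ℝ E]
  {f : ℝ → E → E} {α : E → ℝ → E} {U : Set E} {s T t : ℝ} {z0 : E}

theorem flow_eq_add_integral [CompleteSpace E] (hf : Continuous fun p : ℝ × E => f p.1 p.2)
    (hinit : ∀ w ∈ U, α w s = w)
    (hflow : ∀ w ∈ U, ∀ t ∈ Icc s T, HasDerivWithinAt (α w) (f t (α w t)) (Icc s T) t)
    {w : E} (hw : w ∈ U) (ht : t ∈ Icc s T) :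
    α w t = w + ∫ τ in s..t, f τ (α w τ) := by
  have hα : ContinuousOn (α w) (Icc s T) := fun τ hτ => (hflow w hw τ hτ).continuousWithinAt
  rw [eq_add_integral_of_hasDerivWithinAt_Icc (hflow w hw)
    (hf.comp_continuousOn (continuousOn_id.prodMk hα)) ht, hinit w hw]

theorem continuousOn_fderiv_comp_fderiv_flow (hf : ContDiff ℝ 1 fun p : ℝ × E => f p.1 p.2)
    (hU : IsOpen U) (hsmooth : ContDiffOn ℝ 1 (fun p : E × ℝ => α p.1 p.2) (U ×ˢ Icc s T)) :
    ContinuousOn (fun p : E × ℝ =>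
      (fderiv ℝ (f p.2) (α p.1 p.2)).comp (fderiv ℝ (fun w => α w p.2) p.1)) (U ×ˢ Icc s T) := by
  have hDf : Continuous fun p : ℝ × E => fderiv ℝ (f p.1) p.2 :=
    (ContDiff.fderiv (m := 1) (n := 0) (f := fun p z => f p.1 z)
      (hf.comp (contDiff_fst.fst.prodMk contDiff_snd)) contDiff_snd le_rfl).continuous
  exact (hDf.comp_continuousOn (continuousOn_snd.prodMk hsmooth.continuousOn)).clm_comp
    (hsmooth.continuousOn_fderiv_slice hU)

theorem fderiv_flow_eq_id_add_integral [ProperSpace E]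
    (hf : ContDiff ℝ 1 fun p : ℝ × E => f p.1 p.2) (hU : IsOpen U) (hz0 : z0 ∈ U)
    (hinit : ∀ w ∈ U, α w s = w)
    (hflow : ∀ w ∈ U, ∀ t ∈ Icc s T, HasDerivWithinAt (α w) (f t (α w t)) (Icc s T) t)
    (hsmooth : ContDiffOn ℝ 1 (fun p : E × ℝ => α p.1 p.2) (U ×ˢ Icc s T)) (ht : t ∈ Icc s T) :
    fderiv ℝ (fun w => α w t) z0 = ContinuousLinearMap.id ℝ E +
      ∫ τ in s..t, (fderiv ℝ (f τ) (α z0 τ)).comp (fderiv ℝ (fun w => α w τ) z0) := by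
  have hsub : [[s, t]] ⊆ Icc s T := uIcc_of_le ht.1 ▸ Icc_subset_Icc_right ht.2
  have hdα : ∀ x ∈ U, ∀ τ ∈ Icc s T,
      HasFDerivAt (fun w => α w τ) (fderiv ℝ (fun w => α w τ) x) x := fun x hx τ hτ =>
    ((hsmooth.differentiableOn one_ne_zero).differentiableAt_slice hU hx hτ).hasFDerivAt
  have hdf : ∀ τ z, HasFDerivAt (f τ) (fderiv ℝ (f τ) z) z := fun τ z =>
    ((hf.comp (contDiff_const.prodMk contDiff_id)).differentiable one_ne_zero z).hasFDerivAt
  have hα : ∀ x ∈ U, ContinuousOn (α x) (Icc s T) := fun x hx τ hτ =>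
    (hflow x hx τ hτ).continuousWithinAt
  have hderiv := hasFDerivAt_intervalIntegral_of_continuousOn (F := fun x τ => f τ (α x τ)) hU hz0
    (fun x hx => (hf.continuous.comp_continuousOn (continuousOn_id.prodMk (hα x hx))).mono hsub)
    ((continuousOn_fderiv_comp_fderiv_flow hf hU hsmooth).mono (prod_mono subset_rfl hsub))
    (fun x hx τ hτ => (hdf τ (α x τ)).comp x (hdα x hx τ (hsub hτ)))
  refine (((hasFDerivAt_id z0).add hderiv).congr_of_eventuallyEq ?_).fderiv
  filter_upwards [hU.mem_nhds hz0] with w hw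
  exact flow_eq_add_integral hf.continuous hinit hflow hw ht

theorem hasDerivWithinAt_fderiv_flow [ProperSpace E]
    (hf : ContDiff ℝ 1 fun p : ℝ × E => f p.1 p.2) (hU : IsOpen U) (hz0 : z0 ∈ U)
    (hinit : ∀ w ∈ U, α w s = w)
    (hflow : ∀ w ∈ U, ∀ t ∈ Icc s T, HasDerivWithinAt (α w) (f t (α w t)) (Icc s T) t)
    (hsmooth : ContDiffOn ℝ 1 (fun p : E × ℝ => α p.1 p.2) (U ×ˢ Icc s T)) (ht : t ∈ Icc s T) :
    HasDerivWithinAt (fun τ => fderiv ℝ (fun w => α w τ) z0)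
      ((fderiv ℝ (f t) (α z0 t)).comp (fderiv ℝ (fun w => α w t) z0)) (Icc s T) t :=
  hasDerivWithinAt_of_eqOn_const_add_integral (c := ContinuousLinearMap.id ℝ E)
    (φ := fun τ => (fderiv ℝ (f τ) (α z0 τ)).comp (fderiv ℝ (fun w => α w τ) z0))
    (fun _ hτ => fderiv_flow_eq_id_add_integral hf hU hz0 hinit hflow hsmooth hτ)
    ((continuousOn_fderiv_comp_fderiv_flow hf hU hsmooth).comp
      (continuousOn_const.prodMk continuousOn_id) fun _ hτ => ⟨hz0, hτ⟩) ht

end Flow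

theorem forward_sensitivity_general
    (nz : ℕ)
    (f : ℝ → EuclideanSpace ℝ (Fin nz) → EuclideanSpace ℝ (Fin nz))
    (hf : ContDiff ℝ 1 (fun p : ℝ × EuclideanSpace ℝ (Fin nz) => f p.1 p.2))
    (s T : ℝ)
    (U : Set (EuclideanSpace ℝ (Fin nz))) (hU : IsOpen U)
    (z0 : EuclideanSpace ℝ (Fin nz)) (hz0 : z0 ∈ U)
    (α : EuclideanSpace ℝ (Fin nz) → ℝ → EuclideanSpace ℝ (Fin nz))
    (hinit : ∀ w ∈ U, α w s = w)
    (hflow : ∀ w ∈ U, ∀ t ∈ Icc s T,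
      HasDerivWithinAt (α w) (f t (α w t)) (Icc s T) t)
    (hsmooth : ContDiffOn ℝ 1
      (fun p : EuclideanSpace ℝ (Fin nz) × ℝ => α p.1 p.2) (U ×ˢ Icc s T)) :
    fderiv ℝ (fun w => α w s) z0
        = ContinuousLinearMap.id ℝ (EuclideanSpace ℝ (Fin nz)) ∧
    ∀ t ∈ Icc s T,
      HasDerivWithinAt (fun τ => fderiv ℝ (fun w => α w τ) z0)
        ((fderiv ℝ (fun z => f t z) (α z0 t)).comp
          (fderiv ℝ (fun w => α w t) z0))
        (Icc s T) t := by
  refine ⟨?_, fun t ht => hasDerivWithinAt_fderiv_flow hf hU hz0 hinit hflow hsmooth ht⟩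
  have hid : (fun w => α w s) =ᶠ[𝓝 z0] id := by
    filter_upwards [hU.mem_nhds hz0] with w hw using hinit w hw
  rw [hid.fderiv_eq, fderiv_id]

/-- **Forward sensitivity.**
Let `α` be the flow of `ż = f(t, z)` on a neighborhood `U` of `z0` over `[s, T]`,
jointly continuously differentiable. Then the sensitivity
`v t = D_w α(w, t) |_{w = z0}` satisfies `v s = id` and the linear matrix-valued
variational equation `v' t = Df(t, z t) ∘ v t` on `[s, T]`, where `z t = α z0 t`. -/
theorem forward_sensitivity
    (nz : ℕ)
    (f : ℝ → EuclideanSpace ℝ (Fin nz) → EuclideanSpace ℝ (Fin nz))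
    (hf : ContDiff ℝ 1 (fun p : ℝ × EuclideanSpace ℝ (Fin nz) => f p.1 p.2))
    (s T : ℝ) (hsT : s < T)
    (U : Set (EuclideanSpace ℝ (Fin nz))) (hU : IsOpen U)
    (z0 : EuclideanSpace ℝ (Fin nz)) (hz0 : z0 ∈ U)
    (α : EuclideanSpace ℝ (Fin nz) → ℝ → EuclideanSpace ℝ (Fin nz))
    (hinit : ∀ w ∈ U, α w s = w)
    (hflow : ∀ w ∈ U, ∀ t ∈ Icc s T,
      HasDerivWithinAt (α w) (f t (α w t)) (Icc s T) t)
    (hsmooth : ContDiffOn ℝ 1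
      (fun p : EuclideanSpace ℝ (Fin nz) × ℝ => α p.1 p.2) (U ×ˢ Icc s T)) :
    fderiv ℝ (fun w => α w s) z0
        = ContinuousLinearMap.id ℝ (EuclideanSpace ℝ (Fin nz)) ∧
    ∀ t ∈ Icc s T,
      HasDerivWithinAt (fun τ => fderiv ℝ (fun w => α w τ) z0)
        ((fderiv ℝ (fun z => f t z) (α z0 t)).comp
          (fderiv ℝ (fun w => α w t) z0))
        (Icc s T) t :=
  forward_sensitivity_general nz f hf s T U hU z0 hz0 α hinit hflow hsmooth
end

section
/- Suppose g(B_1) = 0, suppose Dg(B_0) = id − R where R is a continuous linear endomorphism of E with R^{N+1} = 0 and ‖R‖ ≤ m_γ^z, suppose ‖D²g(x)‖ ≤ m_{∂γ} on the closed segment joining B_0 and B_1, and suppose ‖B_1 − B_0‖ ≤ η · m_L^θ · m_γ^θ. Let B̄ = B_0 − Dg(B_0)^{-1} g(B_0) be the result of one Newton step applied at B_0. Then ‖B_1 − B̄‖ ≤ (1/2) · η² · (m_L^θ m_γ^θ)² · m_{∂γ} · Σ_{n=0}^{N} (m_γ^z)^n; in particular, ‖B_1 − B̄‖ ≤ M η²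 for the constant M = (1/2)(m_L^θ m_γ^θ)² m_{∂γ} Σ_{n=0}^{N} (m_γ^z)^n (which equals (1/2)(m_L^θ m_γ^θ)² m_{∂γ} (1 − (m_γ^z)^{N+1})/(1 − m_γ^z) when m_γ^z ≠ 1). -/
/-!
The Newton step and `g B1 = 0` give `(1 - R) (B1 - Bbar) = -(g B1 - g B0 - Dg(B0) (B1 - B0))`,
and the second-order Taylor estimate bounds the right-hand side by `mδγ / 2 * ‖B1 - B0‖ ^ 2`.
Since `R` is nilpotent, `1 - R` is inverted by the finite geometric series `∑_{n ≤ N} R ^ n`,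
whose norm is at most `∑_{n ≤ N} mγz ^ n`.
-/

open Finset

section Nilpotent

variable {𝕜 E : Type*} [NontriviallyNormedField 𝕜] [NormedAddCommGroup E] [NormedSpace 𝕜 E]

theorem ContinuousLinearMap.norm_pow_le_of_norm_le {R : E →L[𝕜] E} {m : ℝ} (hR : ‖R‖ ≤ m)
    (n : ℕ) : ‖R ^ n‖ ≤ m ^ n := by
  rcases n.eq_zero_or_pos with rfl | hn
  · simpa [one_def] using norm_id_le
  · exact (norm_pow_le' R hn).trans (pow_le_pow_left₀ (norm_nonneg R) hR n)

theorem ContinuousLinearMap.norm_le_geom_sum_mul_norm_one_sub_apply {R : E →L[𝕜] E} {N : ℕ}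
    {m : ℝ} (hnil : R ^ (N + 1) = 0) (hR : ‖R‖ ≤ m) (x : E) :
    ‖x‖ ≤ (∑ n ∈ range (N + 1), m ^ n) * ‖(1 - R) x‖ := by
  set S := ∑ n ∈ range (N + 1), R ^ n
  have hS : S * (1 - R) = 1 := by rw [geom_sum_mul_neg, hnil, sub_zero]
  have hSnorm : ‖S‖ ≤ ∑ n ∈ range (N + 1), m ^ n :=
    (norm_sum_le _ _).trans (sum_le_sum fun n _ => norm_pow_le_of_norm_le hR n)
  calc ‖x‖ = ‖(S * (1 - R)) x‖ := by rw [hS]; rfl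
    _ ≤ ‖S‖ * ‖(1 - R) x‖ := S.le_opNorm _
    _ ≤ _ := mul_le_mul_of_nonneg_right hSnorm (norm_nonneg _)

end Nilpotent

section Taylor

variable {E F : Type*} [NormedAddCommGroup E] [NormedSpace ℝ E] [NormedAddCommGroup F]
  [NormedSpace ℝ F] {g : E → F} {K : ℝ}

theorem Convex.norm_fderiv_sub_le_of_norm_iteratedFDeriv_two_le {s : Set E} (hs : Convex ℝ s)
    (hg : ∀ x ∈ s, ContDiffAt ℝ 2 g x) (hK : ∀ x ∈ s, ‖iteratedFDeriv ℝ 2 g x‖ ≤ K)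
    {x y : E} (hx : x ∈ s) (hy : y ∈ s) : ‖fderiv ℝ g x - fderiv ℝ g y‖ ≤ K * ‖x - y‖ := by
  refine hs.norm_image_sub_le_of_norm_fderiv_le (𝕜 := ℝ) (f := fderiv ℝ g) (fun z hz => ?_)
    (fun z hz => ?_) hy hx
  · exact ((hg z hz).fderiv_right (m := 1) le_rfl).differentiableAt one_ne_zero
  · rw [← norm_iteratedFDeriv_one, norm_iteratedFDeriv_fderiv]
    exact hK z hz

theorem norm_sub_sub_fderiv_le_of_norm_fderiv_sub_le {a b : E}
    (hg : ∀ x ∈ segment ℝ a b, DifferentiableAt ℝ g x)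
    (hK : ∀ x ∈ segment ℝ a b, ‖fderiv ℝ g x - fderiv ℝ g a‖ ≤ K * ‖x - a‖) :
    ‖g b - g a - fderiv ℝ g a (b - a)‖ ≤ K / 2 * ‖b - a‖ ^ 2 := by
  let v := b - a
  let c : ℝ → E := fun t => a + t • v
  have hc : ∀ t ∈ Set.Icc (0 : ℝ) 1, c t ∈ segment ℝ a b := fun t ht => by
    rw [segment_eq_image']
    exact ⟨t, ht, rfl⟩
  let f : ℝ → F := fun t => g (c t) - g a - t • fderiv ℝ g a v
  let f' : ℝ → F := fun t => fderiv ℝ g (c t) v - fderiv ℝ g a v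
  have hf : ∀ t ∈ Set.Icc (0 : ℝ) 1, HasDerivAt f (f' t) t := fun t ht => by
    have hcd : HasDerivAt c v t :=
      (((hasDerivAt_id' t).smul_const v).const_add a).congr_deriv (one_smul ℝ v)
    exact ((((hg _ (hc t ht)).hasFDerivAt.comp_hasDerivAt t hcd).sub_const (g a)).sub
      ((hasDerivAt_id' t).smul_const (fderiv ℝ g a v))).congr_deriv (by rw [one_smul])
  have hB : ∀ t : ℝ, HasDerivAt (fun t => K / 2 * ‖v‖ ^ 2 * t ^ 2) (K * ‖v‖ ^ 2 * t) t :=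
    fun t => ((hasDerivAt_pow 2 t).const_mul (K / 2 * ‖v‖ ^ 2)).congr_deriv (by ring)
  have hbound : ∀ t ∈ Set.Ico (0 : ℝ) 1, ‖f' t‖ ≤ K * ‖v‖ ^ 2 * t := fun t ht => by
    have hct : ‖c t - a‖ = t * ‖v‖ := by simp [c, norm_smul, abs_of_nonneg ht.1]
    calc ‖f' t‖ ≤ ‖fderiv ℝ g (c t) - fderiv ℝ g a‖ * ‖v‖ := by
          rw [show f' t = (fderiv ℝ g (c t) - fderiv ℝ g a) v from rfl]
          exact ContinuousLinearMap.le_opNorm _ _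
      _ ≤ K * ‖c t - a‖ * ‖v‖ :=
        mul_le_mul_of_nonneg_right (hK _ (hc t (Set.Ico_subset_Icc_self ht))) (norm_nonneg v)
      _ = K * ‖v‖ ^ 2 * t := by rw [hct]; ring
  have := image_norm_le_of_norm_deriv_right_le_deriv_boundary
    (fun t ht => (hf t ht).continuousAt.continuousWithinAt)
    (fun t ht => (hf t (Set.Ico_subset_Icc_self ht)).hasDerivWithinAt) (by simp [f, c]) hB
    hbound (Set.right_mem_Icc.2 zero_le_one)
  simpa [f, c, v] using this

theorem norm_sub_sub_fderiv_le_of_norm_iteratedFDeriv_two_le {a b : E}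
    (hg : ∀ x ∈ segment ℝ a b, ContDiffAt ℝ 2 g x)
    (hK : ∀ x ∈ segment ℝ a b, ‖iteratedFDeriv ℝ 2 g x‖ ≤ K) :
    ‖g b - g a - fderiv ℝ g a (b - a)‖ ≤ K / 2 * ‖b - a‖ ^ 2 :=
  norm_sub_sub_fderiv_le_of_norm_fderiv_sub_le
    (fun x hx => (hg x hx).differentiableAt two_ne_zero)
    (fun _ hx => (convex_segment a b).norm_fderiv_sub_le_of_norm_iteratedFDeriv_two_le hg hK hx
      (left_mem_segment ℝ a b))

end Taylor

theorem newton_tracking_nilpotent_general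
    {E : Type*} [NormedAddCommGroup E] [NormedSpace ℝ E]
    (N : ℕ) (g : E → E) (B0 B1 : E)
    (U : Set E) (hU : IsOpen U) (hseg : segment ℝ B0 B1 ⊆ U)
    (hg : ContDiffOn ℝ 2 g U)
    (hroot : g B1 = 0)
    (R : E →L[ℝ] E)
    (hDg : fderiv ℝ g B0 = 1 - R)
    (hnil : R ^ (N + 1) = 0)
    (η mLθ mγθ mγz mδγ : ℝ)
    (hmγz : 0 ≤ mγz) (hmδγ : 0 ≤ mδγ)
    (hR : ‖R‖ ≤ mγz)
    (hK : ∀ x ∈ segment ℝ B0 B1, ‖iteratedFDerivWithin ℝ 2 g U x‖ ≤ mδγ)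
    (hdist : ‖B1 - B0‖ ≤ η * (mLθ * mγθ))
    (Bbar : E)
    (hNewton : fderiv ℝ g B0 (B0 - Bbar) = g B0) :
    ‖B1 - Bbar‖ ≤
      (1 / 2) * η ^ 2 * (mLθ * mγθ) ^ 2 * mδγ * ∑ n ∈ Finset.range (N + 1), mγz ^ n ∧
    (mγz ≠ 1 →
      ∑ n ∈ Finset.range (N + 1), mγz ^ n = (1 - mγz ^ (N + 1)) / (1 - mγz)) := by
  refine ⟨?_, fun h => by rw [range_eq_Ico, geom_sum_Ico' h (Nat.zero_le _), pow_zero]⟩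
  have hTaylor : ‖g B1 - g B0 - fderiv ℝ g B0 (B1 - B0)‖ ≤ mδγ / 2 * ‖B1 - B0‖ ^ 2 :=
    norm_sub_sub_fderiv_le_of_norm_iteratedFDeriv_two_le (a := B0) (b := B1)
      (fun x hx => hg.contDiffAt (hU.mem_nhds (hseg hx)))
      (fun x hx => by rw [← iteratedFDerivWithin_of_isOpen 2 hU (hseg hx)]; exact hK x hx)
  have hNewtonError : (1 - R) (B1 - Bbar) = -(g B1 - g B0 - fderiv ℝ g B0 (B1 - B0)) := by
    rw [← hDg, hroot, ← sub_add_sub_cancel B1 B0 Bbar, map_add, hNewton]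
    abel
  calc ‖B1 - Bbar‖ ≤ (∑ n ∈ range (N + 1), mγz ^ n) * ‖(1 - R) (B1 - Bbar)‖ :=
        R.norm_le_geom_sum_mul_norm_one_sub_apply hnil hR _
    _ ≤ (∑ n ∈ range (N + 1), mγz ^ n) * (mδγ / 2 * (η * (mLθ * mγθ)) ^ 2) := by
        rw [hNewtonError, norm_neg]
        gcongr
        exact hTaylor.trans (by gcongr)
    _ = _ := by ring

/-- **Quadratic fixed-point tracking with nilpotent multiple-shooting Jacobian.**
Suppose `g B1 = 0`, `Dg B0 = id - R` with `R` nilpotent (`R^(N+1) = 0`) and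
`‖R‖ ≤ mγz`, `‖D²g‖ ≤ m∂γ` on the segment joining `B0` and `B1`, and
`‖B1 - B0‖ ≤ η · mLθ · mγθ`. Then the result `B̄` of one Newton step at `B0`
(characterized by `Dg B0 (B0 - B̄) = g B0`) satisfies
`‖B1 - B̄‖ ≤ (1/2) η² (mLθ mγθ)² m∂γ Σ_{n=0}^{N} mγz^n`; moreover when
`mγz ≠ 1` the geometric sum equals `(1 - mγz^(N+1))/(1 - mγz)`. -/
theorem newton_tracking_nilpotent
    {E : Type*} [NormedAddCommGroup E] [NormedSpace ℝ E] [CompleteSpace E]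
    (N : ℕ) (g : E → E) (B0 B1 : E)
    (U : Set E) (hU : IsOpen U) (hseg : segment ℝ B0 B1 ⊆ U)
    (hg : ContDiffOn ℝ 2 g U)
    (hroot : g B1 = 0)
    (R : E →L[ℝ] E)
    (hDg : fderiv ℝ g B0 = 1 - R)
    (hnil : R ^ (N + 1) = 0)
    (η mLθ mγθ mγz mδγ : ℝ)
    (hη : 0 ≤ η) (hmLθ : 0 ≤ mLθ) (hmγθ : 0 ≤ mγθ) (hmγz : 0 ≤ mγz) (hmδγ : 0 ≤ mδγ)
    (hR : ‖R‖ ≤ mγz)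
    (hK : ∀ x ∈ segment ℝ B0 B1, ‖iteratedFDerivWithin ℝ 2 g U x‖ ≤ mδγ)
    (hdist : ‖B1 - B0‖ ≤ η * (mLθ * mγθ))
    (Bbar : E)
    (hNewton : fderiv ℝ g B0 (B0 - Bbar) = g B0) :
    ‖B1 - Bbar‖ ≤
      (1 / 2) * η ^ 2 * (mLθ * mγθ) ^ 2 * mδγ * ∑ n ∈ Finset.range (N + 1), mγz ^ n ∧
    (mγz ≠ 1 →
      ∑ n ∈ Finset.range (N + 1), mγz ^ n = (1 - mγz ^ (N + 1)) / (1 - mγz)) :=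
  newton_tracking_nilpotent_general N g B0 B1 U hU hseg hg hroot R hDg hnil η mLθ mγθ mγz mδγ hmγz
    hmδγ hR hK hdist Bbar hNewton
end

section
/- Suppose each φ_n is Fréchet differentiable at B_n for a given B ∈ E. Then the Jacobian of the matching function, Dg(B) = id_E − Dγ(B), is an invertible continuous linear map for every B ∈ E, with inverse given by the finite sum Σ_{n=0}^{N} (Dγ(B))^n. -/
/-- The advancement map `γ : F^{N+1} → F^{N+1}` of multiple shooting:
`(γ B) 0 = z0` and `(γ B) (n+1) = φ n (B n)`. -/
def advancementMap {F : Type*} {N : ℕ} (z0 : F) (φ : Fin N → F → F)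
    (B : Fin (N + 1) → F) : Fin (N + 1) → F :=
  Fin.cons z0 fun n : Fin N => φ n (B n.castSucc)

/-- **Invertibility of the multiple-shooting Jacobian.**
If each `φ n` is differentiable at `B n`, then the Jacobian of the matching
function `g = id - γ`, namely `Dg B = id - Dγ B`, is invertible, with inverse
given by the finite sum `Σ_{n=0}^{N} (Dγ B)^n`. -/
theorem matching_jacobian_invertible
    {F : Type*} [NormedAddCommGroup F] [NormedSpace ℝ F]
    (N : ℕ) (hN : 0 < N) (z0 : F) (φ : Fin N → F → F)
    (B : Fin (N + 1) → F)
    (hφ : ∀ n : Fin N, DifferentiableAt ℝ (φ n) (B n.castSucc)) :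
    (1 - fderiv ℝ (advancementMap z0 φ) B) *
        (∑ n ∈ Finset.range (N + 1), (fderiv ℝ (advancementMap z0 φ) B) ^ n) = 1 ∧
    (∑ n ∈ Finset.range (N + 1), (fderiv ℝ (advancementMap z0 φ) B) ^ n) *
        (1 - fderiv ℝ (advancementMap z0 φ) B) = 1 := by
  set A : Fin N → F →L[ℝ] F := fun n => fderiv ℝ (φ n) (B n.castSucc) with hA
  set L : (Fin (N + 1) → F) →L[ℝ] (Fin (N + 1) → F) :=
    ContinuousLinearMap.pi (fun m => Fin.cases 0
      (fun n => (A n).comp (ContinuousLinearMap.proj n.castSucc)) m) with hLdef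
  have hLapp0 : ∀ v : Fin (N + 1) → F, L v 0 = 0 := fun v => rfl
  have hLappS : ∀ (v : Fin (N + 1) → F) (n : Fin N),
      L v n.succ = A n (v n.castSucc) := fun v n => rfl
  have hL : HasFDerivAt (advancementMap z0 φ) L B := by
    rw [hasFDerivAt_pi']
    intro i
    induction i using Fin.cases with
    | zero =>
      have h1 : (fun B : Fin (N + 1) → F => advancementMap z0 φ B 0) =
          fun _ => z0 := rfl
      have h2 : (ContinuousLinearMap.proj 0).comp L =
          (0 : (Fin (N + 1) → F) →L[ℝ] F) := by
        ext v; exact hLapp0 v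
      rw [h1, h2]
      exact hasFDerivAt_const z0 B
    | succ n =>
      have h1 : (fun B : Fin (N + 1) → F => advancementMap z0 φ B n.succ) =
          fun B : Fin (N + 1) → F => φ n (B n.castSucc) := by
        funext B; simp [advancementMap]
      have h2 : (ContinuousLinearMap.proj n.succ).comp L =
          (A n).comp (ContinuousLinearMap.proj n.castSucc) := by
        ext v; exact hLappS v n
      rw [h1, h2]
      exact ((hφ n).hasFDerivAt).comp B (hasFDerivAt_apply n.castSucc B)
  have hfd : fderiv ℝ (advancementMap z0 φ) B = L := hL.fderiv
  have key : ∀ (k : ℕ) (v : Fin (N + 1) → F) (m : Fin (N + 1)),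
      (m : ℕ) < k → (L ^ k) v m = 0 := by
    intro k
    induction k with
    | zero => intro v m hm; omega
    | succ k ih =>
      intro v m hm
      have hpow : (L ^ (k + 1)) v = L ((L ^ k) v) := by
        rw [pow_succ']; rfl
      rw [hpow]
      induction m using Fin.cases with
      | zero => exact hLapp0 _
      | succ n =>
        rw [hLappS]
        have : (L ^ k) v n.castSucc = 0 := by
          apply ih
          simp only [Fin.coe_castSucc]
          have := hm
          simp only [Fin.val_succ] at this
          omega
        rw [this, map_zero]
  have hnil : L ^ (N + 1) = 0 := by
    ext v m
    exact key (N + 1) v m m.isLt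
  rw [hfd]
  constructor
  · rw [mul_neg_geom_sum, hnil, sub_zero]
  · rw [geom_sum_mul_neg, hnil, sub_zero]
end

section
/- Suppose each φ_n is Fréchet differentiable at B_n for a given B ∈ E, and let B′ ∈ E. Then the Newton linear system (id_E − Dγ(B))(B′ − B) = γ(B) − B holds if and only if B′_0 = z_0 and B′_{n+1} = φ_n(B_n) + Dφ_n(B_n)(B′_n − B_n) for every 0 ≤ n ≤ N−1. That is, one exact Newton iteration on the matching function is equivalent to the componentwise direct multiple shooting recursion. -/
section AdvancementMap

variable {F : Type*} {N : ℕ} (z0 : F) (φ : Fin N → F → F)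

@[simp]
theorem advancementMap_apply_zero (B : Fin (N + 1) → F) : advancementMap z0 φ B 0 = z0 :=
  rfl

@[simp]
theorem advancementMap_apply_succ (B : Fin (N + 1) → F) (n : Fin N) :
    advancementMap z0 φ B n.succ = φ n (B n.castSucc) :=
  rfl

variable {𝕜 : Type*} [NontriviallyNormedField 𝕜] [NormedAddCommGroup F] [NormedSpace 𝕜 F]

theorem hasFDerivAt_advancementMap {B : Fin (N + 1) → F}
    (hφ : ∀ n : Fin N, DifferentiableAt 𝕜 (φ n) (B n.castSucc)) :
    HasFDerivAt (advancementMap z0 φ)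
      (ContinuousLinearMap.pi (Fin.cons 0 fun n : Fin N =>
        (fderiv 𝕜 (φ n) (B n.castSucc)).comp (ContinuousLinearMap.proj n.castSucc))) B := by
  refine hasFDerivAt_pi'' (Fin.cases ?_ fun n => ?_)
  · simpa using hasFDerivAt_const z0 B
  · simpa [Function.comp_def] using (hφ n).hasFDerivAt.comp B (hasFDerivAt_apply n.castSucc B)

theorem fderiv_advancementMap_apply {B : Fin (N + 1) → F}
    (hφ : ∀ n : Fin N, DifferentiableAt 𝕜 (φ n) (B n.castSucc)) (V : Fin (N + 1) → F) :
    fderiv 𝕜 (advancementMap z0 φ) B V =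
      Fin.cons 0 fun n : Fin N => fderiv 𝕜 (φ n) (B n.castSucc) (V n.castSucc) := by
  rw [(hasFDerivAt_advancementMap z0 φ hφ).fderiv]
  ext i
  refine Fin.cases ?_ (fun n => ?_) i <;> simp

end AdvancementMap

theorem newton_system_iff_direct_recursion_general
    {F : Type*} [NormedAddCommGroup F] [NormedSpace ℝ F]
    (N : ℕ) (z0 : F) (φ : Fin N → F → F)
    (B B' : Fin (N + 1) → F)
    (hφ : ∀ n : Fin N, DifferentiableAt ℝ (φ n) (B n.castSucc)) :
    (1 - fderiv ℝ (advancementMap z0 φ) B) (B' - B)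
        = advancementMap z0 φ B - B ↔
      (B' 0 = z0 ∧ ∀ n : Fin N,
        B' n.succ = φ n (B n.castSucc)
          + fderiv ℝ (φ n) (B n.castSucc) (B' n.castSucc - B n.castSucc)) := by
  rw [sub_apply, fderiv_advancementMap_apply z0 φ hφ, funext_iff, Fin.forall_fin_succ]
  refine and_congr (by simp) (forall_congr' fun n => ?_)
  simp only [Pi.sub_apply, one_apply_eq_self, Fin.cons_succ,
    advancementMap_apply_succ]
  rw [sub_right_comm, sub_left_inj, sub_eq_iff_eq_add]

/-- **Newton iteration ⟺ direct multiple shooting recursion.**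
If each `φ n` is differentiable at `B n`, then the exact Newton linear system
`(id - Dγ B) (B' - B) = γ B - B` holds if and only if `B' 0 = z0` and
`B' (n+1) = φ n (B n) + Dφ n (B n) (B' n - B n)` for every `0 ≤ n ≤ N-1`. -/
theorem newton_system_iff_direct_recursion
    {F : Type*} [NormedAddCommGroup F] [NormedSpace ℝ F]
    (N : ℕ) (hN : 0 < N) (z0 : F) (φ : Fin N → F → F)
    (B B' : Fin (N + 1) → F)
    (hφ : ∀ n : Fin N, DifferentiableAt ℝ (φ n) (B n.castSucc)) :
    (1 - fderiv ℝ (advancementMap z0 φ) B) (B' - B)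
        = advancementMap z0 φ B - B ↔
      (B' 0 = z0 ∧ ∀ n : Fin N,
        B' n.succ = φ n (B n.castSucc)
          + fderiv ℝ (φ n) (B n.castSucc) (B' n.castSucc - B n.castSucc)) :=
  newton_system_iff_direct_recursion_general N z0 φ B B' hφ
end
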